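/- arXiv:math/0605057 — 10 statements merged into one kernel-verified Lean document; each statement's English description precedes it below -/
import Mathlib

section
/- Let f: ℝ → (0,∞) and define the weighted total variation WTV(f) = 2·sup over finite increasing tuples x₀<x₁<…<xₙ of Σⱼ |f(xⱼ)−f(xⱼ₋₁)|/(f(xⱼ)+f(xⱼ₋₁)). Then (inf f / sup f)·TV(log f) ≤ WTV(f) ≤ TV(log f), where TV denotes the total variation. -/
open scoped ENNReal

/-- Sum of variations of `g` along a finite increasing tuple. -/
noncomputable def tvSum (g : ℝ → ℝ) (n : ℕ) (x : Fin (n + 1) → ℝ) : ℝ :=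
  ∑ j : Fin n, |g (x j.succ) - g (x j.castSucc)|

/-- Total variation of `g : ℝ → ℝ`, as a supremum over finite increasing tuples. -/
noncomputable def TV (g : ℝ → ℝ) : ℝ≥0∞ :=
  ⨆ (n : ℕ) (x : { x : Fin (n + 1) → ℝ // StrictMono x }),
    ENNReal.ofReal (tvSum g n x.1)

/-- Weighted sum of variations of a positive function `f` along a finite increasing tuple. -/
noncomputable def wtvSum (f : ℝ → ℝ) (n : ℕ) (x : Fin (n + 1) → ℝ) : ℝ :=
  2 * ∑ j : Fin n, |f (x j.succ) - f (x j.castSucc)| / (f (x j.succ) + f (x j.castSucc))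

/-- Weighted total variation of `f : ℝ → (0,∞)`. -/
noncomputable def WTV (f : ℝ → ℝ) : ℝ≥0∞ :=
  ⨆ (n : ℕ) (x : { x : Fin (n + 1) → ℝ // StrictMono x }),
    ENNReal.ofReal (wtvSum f n x.1)


open intervalIntegral in
lemma keyA' {a b : ℝ} (hb : 0 < b) (hba : b ≤ a) :
    2 * ((a - b) / (a + b)) ≤ Real.log a - Real.log b := by
  have ha : 0 < a := hb.trans_le hba
  have hab : 0 < a + b := by linarith
  have hcont1 : IntervalIntegrable (fun x : ℝ => x⁻¹) MeasureTheory.volume b a := by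
    apply ContinuousOn.intervalIntegrable
    apply ContinuousOn.inv₀ continuousOn_id
    intro x hx
    rw [Set.uIcc_of_le hba] at hx
    exact ne_of_gt (lt_of_lt_of_le hb hx.1)
  have hcont2 : IntervalIntegrable (fun x : ℝ => (a + b - x)⁻¹) MeasureTheory.volume b a := by
    apply ContinuousOn.intervalIntegrable
    apply ContinuousOn.inv₀ (by fun_prop)
    intro x hx
    rw [Set.uIcc_of_le hba] at hx
    have : x ≤ a := hx.2
    have : 0 < a + b - x := by linarith
    linarith
  have hI1 : ∫ x in b..a, x⁻¹ = Real.log a - Real.log b := by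
    rw [integral_inv_of_pos hb ha, Real.log_div ha.ne' hb.ne']
  have hI2 : (∫ x in b..a, (a + b - x)⁻¹) = Real.log a - Real.log b := by
    have h := intervalIntegral.integral_comp_sub_left (a := b) (b := a)
      (fun y : ℝ => y⁻¹) (a + b)
    simp only [add_sub_cancel_left, add_sub_cancel_right] at h
    rw [h, hI1]
  have hsum : (∫ x in b..a, (x⁻¹ + (a + b - x)⁻¹)) = 2 * (Real.log a - Real.log b) := by
    rw [integral_add hcont1 hcont2, hI1, hI2]; ring
  have hmono : (a - b) * (4 / (a + b)) ≤ 2 * (Real.log a - Real.log b) := by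
    rw [← hsum]
    have := intervalIntegral.integral_const (a := b) (b := a) (4 / (a + b))
    calc (a - b) * (4 / (a + b)) = ∫ _ in b..a, 4 / (a + b) := by
          rw [intervalIntegral.integral_const]; simp [smul_eq_mul]
      _ ≤ _ := by
          apply intervalIntegral.integral_mono_on hba intervalIntegrable_const
            (hcont1.add hcont2)
          intro x hx
          have hx1 : 0 < x := lt_of_lt_of_le hb hx.1
          have hx2 : 0 < a + b - x := by have := hx.2; linarith
          rw [inv_eq_one_div, inv_eq_one_div, div_add_div _ _ hx1.ne' hx2.ne',
            div_le_div_iff₀ hab (by positivity)]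
          nlinarith [sq_nonneg (a + b - 2*x)]
  have : (a - b) * (4 / (a + b)) = 2 * (2 * ((a - b) / (a + b))) := by ring
  linarith

lemma keyA {a b : ℝ} (ha : 0 < a) (hb : 0 < b) :
    2 * (|a - b| / (a + b)) ≤ |Real.log a - Real.log b| := by
  rcases le_total b a with h | h
  · rw [abs_of_nonneg (by linarith), abs_of_nonneg
      (by linarith [Real.log_le_log hb h] : (0:ℝ) ≤ Real.log a - Real.log b)]
    exact keyA' hb h
  · rw [abs_sub_comm, abs_sub_comm (Real.log a), abs_of_nonneg (by linarith),
      abs_of_nonneg (by linarith [Real.log_le_log ha h] : (0:ℝ) ≤ Real.log b - Real.log a),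
      add_comm a b]
    exact keyA' ha h

lemma keyB' {i s a b : ℝ} (hi : 0 < i) (hia : i ≤ a) (hib : i ≤ b)
    (has : a ≤ s) (hbs : b ≤ s) (hba : b ≤ a) :
    (i / s) * (Real.log a - Real.log b) ≤ 2 * ((a - b) / (a + b)) := by
  have hb : 0 < b := hi.trans_le hib
  have ha : 0 < a := hi.trans_le hia
  have hs : 0 < s := hi.trans_le (hia.trans has)
  have hlog : Real.log a - Real.log b ≤ (a - b) / b := by
    rw [← Real.log_div ha.ne' hb.ne']
    have := Real.log_le_sub_one_of_pos (div_pos ha hb)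
    rw [div_sub_one hb.ne'] at this; exact this
  calc (i / s) * (Real.log a - Real.log b) ≤ (i / s) * ((a - b) / b) := by
        apply mul_le_mul_of_nonneg_left hlog (by positivity)
    _ ≤ 2 * ((a - b) / (a + b)) := by
        rw [div_mul_div_comm, ← mul_div_assoc, div_le_div_iff₀ (by positivity) (by positivity)]
        have h1 : i * a ≤ b * s := mul_le_mul hib has ha.le hb.le
        have key : i * (a + b) ≤ 2 * (s * b) := by nlinarith
        nlinarith [mul_le_mul_of_nonneg_left key (sub_nonneg.2 hba)]

lemma keyB {i s a b : ℝ} (hi : 0 < i) (hia : i ≤ a) (hib : i ≤ b)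
    (has : a ≤ s) (hbs : b ≤ s) :
    (i / s) * |Real.log a - Real.log b| ≤ 2 * (|a - b| / (a + b)) := by
  have ha : 0 < a := hi.trans_le hia
  have hb : 0 < b := hi.trans_le hib
  rcases le_total b a with h | h
  · rw [abs_of_nonneg
      (by linarith [Real.log_le_log hb h] : (0:ℝ) ≤ Real.log a - Real.log b),
      abs_of_nonneg (by linarith : (0:ℝ) ≤ a - b)]
    exact keyB' hi hia hib has hbs h
  · rw [abs_sub_comm (Real.log a), abs_sub_comm a, abs_of_nonneg
      (by linarith [Real.log_le_log ha h] : (0:ℝ) ≤ Real.log b - Real.log a),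
      abs_of_nonneg (by linarith : (0:ℝ) ≤ b - a), add_comm a b]
    exact keyB' hi hib hia hbs has h

theorem wtv_between_scaled_tv_log (f : ℝ → ℝ)
    (hpos : ∀ x, 0 < f x)
    (m : ℝ) (hm : 0 < m) (hlow : ∀ x, m ≤ f x)
    (M : ℝ) (hup : ∀ x, f x ≤ M) :
    ENNReal.ofReal ((⨅ x, f x) / (⨆ x, f x)) * TV (fun x => Real.log (f x)) ≤ WTV f ∧
    WTV f ≤ TV (fun x => Real.log (f x)) := by
  set i := ⨅ x, f x with hi_def
  set s := ⨆ x, f x with hs_def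
  have hbdd : BddBelow (Set.range f) := ⟨m, fun y ⟨x, hx⟩ => hx ▸ hlow x⟩
  have hbdda : BddAbove (Set.range f) := ⟨M, fun y ⟨x, hx⟩ => hx ▸ hup x⟩
  have hif : ∀ x, i ≤ f x := fun x => ciInf_le hbdd x
  have hfs : ∀ x, f x ≤ s := fun x => le_ciSup hbdda x
  have hi : 0 < i := lt_of_lt_of_le hm (le_ciInf hlow)
  have hc : (0:ℝ) ≤ i / s := le_of_lt (div_pos hi (hi.trans_le ((hif 0).trans (hfs 0))))
  constructor
  · rw [TV, ENNReal.mul_iSup]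
    refine iSup_le fun n => ?_
    rw [ENNReal.mul_iSup]
    refine iSup_le fun x => ?_
    refine le_iSup_of_le n (le_iSup_of_le x ?_)
    rw [← ENNReal.ofReal_mul hc]
    apply ENNReal.ofReal_le_ofReal
    rw [tvSum, wtvSum, Finset.mul_sum, Finset.mul_sum]
    refine Finset.sum_le_sum fun j _ => ?_
    exact keyB hi (hif _) (hif _) (hfs _) (hfs _)
  · refine iSup_le fun n => iSup_le fun x => le_iSup_of_le n (le_iSup_of_le x ?_)
    apply ENNReal.ofReal_le_ofReal
    rw [tvSum, wtvSum, Finset.mul_sum]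
    refine Finset.sum_le_sum fun j _ => ?_
    exact keyA (hpos _) (hpos _)
end

section
/- If f: ℝ → (0,∞) is continuous, then WTV(f) = TV(log f), where WTV(f) = 2·sup over finite increasing tuples of Σⱼ |f(xⱼ)−f(xⱼ₋₁)|/(f(xⱼ)+f(xⱼ₋₁)) and TV denotes total variation. -/
/-! With `x = (a - b) / (a + b)` one has
`log a - log b = log (1 + x) - log (1 - x) = 2 (x + x³/3 + x⁵/5 + ⋯)`, so the weighted increment
`2 |a - b| / (a + b) = 2 |x|` is at most `|log a - log b|` and at least `1 - x²` times it.
The first bound gives `WTV f ≤ TV (log f)` term by term. For the converse, subdivide each interval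
of a partition into `m` equal steps: by the triangle inequality this does not decrease the variation
sum of `log f`, and by uniform continuity of `log f` on the hull of the partition it makes every
increment of `log f`, hence every `|x|`, small. -/

open scoped ENNReal

open Real Finset Filter Topology Set

namespace Real

lemma two_mul_le_log_one_add_sub_log_one_sub {x : ℝ} (h0 : 0 ≤ x) (h1 : x < 1) :
    2 * x ≤ log (1 + x) - log (1 - x) := by
  have hs := hasSum_log_sub_log_of_abs_lt_one (abs_lt.2 ⟨by linarith, h1⟩)
  simpa using le_hasSum hs 0 fun k _ => by positivity

lemma log_one_add_sub_log_one_sub_le {x : ℝ} (h0 : 0 ≤ x) (h1 : x < 1) :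
    log (1 + x) - log (1 - x) ≤ 2 * x / (1 - x ^ 2) := by
  have hs := hasSum_log_sub_log_of_abs_lt_one (abs_lt.2 ⟨by linarith, h1⟩)
  have hgeom := (hasSum_geometric_of_lt_one (sq_nonneg x) (by nlinarith)).mul_left (2 * x)
  refine (hasSum_le (fun k => ?_) hs hgeom).trans_eq (div_eq_mul_inv _ _).symm
  calc 2 * (1 / (2 * k + 1)) * x ^ (2 * k + 1) = 2 * x * (x ^ 2) ^ k * (1 / (2 * k + 1)) := by
        ring
    _ ≤ 2 * x * (x ^ 2) ^ k :=
        mul_le_of_le_one_right (by positivity) (div_le_one_of_le₀ (by linarith) (by positivity))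

lemma log_one_add_div_sub_log_one_sub_div {a b : ℝ} (ha : 0 < a) (hb : 0 < b) :
    log (1 + (a - b) / (a + b)) - log (1 - (a - b) / (a + b)) = log a - log b := by
  have h1 : 1 + (a - b) / (a + b) = 2 * a / (a + b) := by field_simp; ring
  have h2 : 1 - (a - b) / (a + b) = 2 * b / (a + b) := by field_simp; ring
  rw [h1, h2, ← log_div (by positivity) (by positivity), ← log_div ha.ne' hb.ne']
  congr 1
  field_simp

lemma two_mul_abs_div_le_abs_log_sub_log {a b : ℝ} (ha : 0 < a) (hb : 0 < b) :
    2 * (|a - b| / (a + b)) ≤ |log a - log b| := by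
  wlog hba : b ≤ a generalizing a b
  · simpa only [abs_sub_comm, add_comm] using this hb ha (le_of_not_ge hba)
  have hx : (a - b) / (a + b) < 1 := (div_lt_one (by positivity)).2 (by linarith)
  rw [abs_of_nonneg (sub_nonneg.2 hba), abs_of_nonneg (sub_nonneg.2 (log_le_log hb hba)),
    ← log_one_add_div_sub_log_one_sub_div ha hb]
  exact two_mul_le_log_one_add_sub_log_one_sub (by positivity) hx

lemma one_sub_sq_mul_abs_log_sub_log_le {a b : ℝ} (ha : 0 < a) (hb : 0 < b) :
    (1 - (|a - b| / (a + b)) ^ 2) * |log a - log b| ≤ 2 * (|a - b| / (a + b)) := by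
  wlog hba : b ≤ a generalizing a b
  · simpa only [abs_sub_comm, add_comm] using this hb ha (le_of_not_ge hba)
  have hx : (a - b) / (a + b) < 1 := (div_lt_one (by positivity)).2 (by linarith)
  have hx0 : 0 ≤ (a - b) / (a + b) := div_nonneg (by linarith) (by positivity)
  rw [abs_of_nonneg (sub_nonneg.2 hba), abs_of_nonneg (sub_nonneg.2 (log_le_log hb hba)),
    ← log_one_add_div_sub_log_one_sub_div ha hb, mul_comm]
  exact (le_div_iff₀ (by nlinarith)).1 (log_one_add_sub_log_one_sub_le hx0 hx)

lemma one_sub_sq_div_four_mul_abs_log_sub_log_le {a b δ : ℝ} (ha : 0 < a) (hb : 0 < b)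
    (h : |log a - log b| ≤ δ) :
    (1 - δ ^ 2 / 4) * |log a - log b| ≤ 2 * (|a - b| / (a + b)) := by
  have hw : 0 ≤ |a - b| / (a + b) := by positivity
  have hlow := two_mul_abs_div_le_abs_log_sub_log ha hb
  calc (1 - δ ^ 2 / 4) * |log a - log b|
      ≤ (1 - (|a - b| / (a + b)) ^ 2) * |log a - log b| := by gcongr; nlinarith
    _ ≤ 2 * (|a - b| / (a + b)) := one_sub_sq_mul_abs_log_sub_log_le ha hb

end Real

section Partition

variable {n : ℕ}

lemma wtvSum_le_tvSum_log {f : ℝ → ℝ} (hpos : ∀ t, 0 < f t) (x : Fin (n + 1) → ℝ) :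
    wtvSum f n x ≤ tvSum (fun t => log (f t)) n x := by
  rw [wtvSum, tvSum, mul_sum]
  exact sum_le_sum fun j _ => two_mul_abs_div_le_abs_log_sub_log (hpos _) (hpos _)

lemma one_sub_sq_div_four_mul_tvSum_log_le_wtvSum {f : ℝ → ℝ} {δ : ℝ} (hpos : ∀ t, 0 < f t)
    {x : Fin (n + 1) → ℝ}
    (hx : ∀ j : Fin n, |log (f (x j.succ)) - log (f (x j.castSucc))| ≤ δ) :
    (1 - δ ^ 2 / 4) * tvSum (fun t => log (f t)) n x ≤ wtvSum f n x := by
  rw [wtvSum, tvSum, mul_sum, mul_sum]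
  exact sum_le_sum fun j _ => one_sub_sq_div_four_mul_abs_log_sub_log_le (hpos _) (hpos _) (hx j)

lemma tvSum_eq_sum_range (g : ℝ → ℝ) (u : ℕ → ℝ) (N : ℕ) :
    tvSum g N (fun k => u k) = ∑ k ∈ range N, |g (u (k + 1)) - g (u k)| :=
  Fin.sum_univ_eq_sum_range (fun k => |g (u (k + 1)) - g (u k)|) N

end Partition

lemma sum_range_norm_sub_mul_le {E : Type*} [SeminormedAddCommGroup E] (v : ℕ → E) (m n : ℕ) :
    ∑ q ∈ range n, ‖v ((q + 1) * m) - v (q * m)‖ ≤ ∑ k ∈ range (n * m), ‖v (k + 1) - v k‖ := by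
  induction n with
  | zero => simp
  | succ n ih =>
    rw [sum_range_succ, Nat.succ_mul, sum_range_add]
    gcongr
    calc ‖v (n * m + m) - v (n * m)‖
        = ‖∑ r ∈ range m, (v (n * m + (r + 1)) - v (n * m + r))‖ := by
          rw [sum_range_sub (fun r => v (n * m + r)), add_zero]
      _ ≤ ∑ r ∈ range m, ‖v (n * m + r + 1) - v (n * m + r)‖ := norm_sum_le _ _

noncomputable def subdivide (X : ℕ → ℝ) (m k : ℕ) : ℝ :=
  X (k / m) + (k % m : ℕ) / m * (X (k / m + 1) - X (k / m))

section Subdivide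

variable (X : ℕ → ℝ) {m : ℕ}

lemma subdivide_mul_add (hm : 0 < m) (q : ℕ) {r : ℕ} (hr : r ≤ m) :
    subdivide X m (q * m + r) = X q + r / m * (X (q + 1) - X q) := by
  rcases hr.lt_or_eq with hr | rfl
  · rw [subdivide, add_comm (q * m), Nat.add_mul_div_right _ _ hm, Nat.div_eq_of_lt hr, zero_add,
      Nat.add_mul_mod_self_right, Nat.mod_eq_of_lt hr]
  · rw [subdivide, ← Nat.succ_mul, Nat.mul_div_cancel _ hm, Nat.mul_mod_left, Nat.cast_zero,
      div_self (Nat.cast_ne_zero.2 hm.ne')]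
    ring

lemma subdivide_mul (hm : 0 < m) (q : ℕ) : subdivide X m (q * m) = X q := by
  simpa using subdivide_mul_add X hm q (Nat.zero_le m)

lemma subdivide_succ_sub (hm : 0 < m) (k : ℕ) :
    subdivide X m (k + 1) - subdivide X m k = (X (k / m + 1) - X (k / m)) / m := by
  have hr := Nat.mod_lt k hm
  calc subdivide X m (k + 1) - subdivide X m k
      = subdivide X m (k / m * m + (k % m + 1)) - subdivide X m (k / m * m + k % m) := by
        rw [← add_assoc, Nat.div_add_mod']
    _ = (X (k / m + 1) - X (k / m)) / m := by
        rw [subdivide_mul_add X hm _ hr, subdivide_mul_add X hm _ hr.le]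
        push_cast
        ring

end Subdivide

/-- The clamp only matters at the last point, where the clamped value has coefficient `0`. -/
noncomputable def subdividePartition {n : ℕ} (x : Fin (n + 1) → ℝ) (m : ℕ) :
    Fin (n * m + 1) → ℝ :=
  fun k => subdivide (fun i => x (Fin.clamp i n)) m k

section SubdividePartition

variable {n m : ℕ} {x : Fin (n + 1) → ℝ}

lemma subdividePartition_zero :
    subdividePartition x m 0 = x 0 := by
  simp [subdividePartition, subdivide, Fin.clamp]

lemma subdividePartition_last (hm : 0 < m) :
    subdividePartition x m (Fin.last _) = x (Fin.last n) := by
  simp [subdividePartition, subdivide_mul _ hm, Fin.clamp, Fin.last]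

lemma subdividePartition_succ_sub (hm : 0 < m) (j : Fin (n * m)) :
    subdividePartition x m j.succ - subdividePartition x m j.castSucc
      = (x (Fin.clamp (j / m + 1) n) - x (Fin.clamp (j / m) n)) / m :=
  subdivide_succ_sub _ hm j

lemma strictMono_subdividePartition (hx : StrictMono x) (hm : 0 < m) :
    StrictMono (subdividePartition x m) := by
  refine Fin.strictMono_iff_lt_succ.2 fun j => sub_pos.1 ?_
  have hj : (j : ℕ) / m < n := (Nat.div_lt_iff_lt_mul hm).2 j.isLt
  rw [subdividePartition_succ_sub hm]
  exact div_pos (sub_pos.2 (hx (by simp [Fin.lt_def, Fin.clamp]; omega))) (by positivity)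

lemma subdividePartition_succ_sub_le (hx : Monotone x) (hm : 0 < m) (j : Fin (n * m)) :
    subdividePartition x m j.succ - subdividePartition x m j.castSucc
      ≤ (x (Fin.last n) - x 0) / m := by
  rw [subdividePartition_succ_sub hm]
  gcongr
  exacts [hx (Fin.le_last _), hx (Fin.zero_le _)]

lemma tvSum_le_tvSum_subdividePartition (g : ℝ → ℝ) (hm : 0 < m) :
    tvSum g n x ≤ tvSum g (n * m) (subdividePartition x m) := by
  set X : ℕ → ℝ := fun i => x (Fin.clamp i n)
  have hx : x = fun k : Fin (n + 1) => X k := by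
    funext k
    simp [X, Fin.clamp, Nat.le_of_lt_succ k.isLt]
  change tvSum g n x ≤ tvSum g (n * m) (fun k => subdivide X m k)
  rw [tvSum_eq_sum_range, hx, tvSum_eq_sum_range]
  simpa only [subdivide_mul X hm, Real.norm_eq_abs, Function.comp] using
    sum_range_norm_sub_mul_le (g ∘ subdivide X m) m n

end SubdividePartition

lemma exists_tvSum_le_of_continuous {g : ℝ → ℝ} (hg : Continuous g) {n : ℕ}
    {x : Fin (n + 1) → ℝ} (hx : StrictMono x) {δ : ℝ} (hδ : 0 < δ) :
    ∃ (N : ℕ) (y : Fin (N + 1) → ℝ), StrictMono y ∧ tvSum g n x ≤ tvSum g N y ∧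
      ∀ j : Fin N, |g (y j.succ) - g (y j.castSucc)| ≤ δ := by
  set K := Icc (x 0) (x (Fin.last n))
  obtain ⟨η, hη, hgK⟩ := Metric.uniformContinuousOn_iff.1
    (isCompact_Icc.uniformContinuousOn_of_continuous hg.continuousOn : UniformContinuousOn g K)
    δ hδ
  obtain ⟨m, hm⟩ := exists_nat_gt ((x (Fin.last n) - x 0) / η)
  have hm0 : 0 < m := by
    have : 0 ≤ (x (Fin.last n) - x 0) / η :=
      div_nonneg (sub_nonneg.2 (hx.monotone (Fin.zero_le _))) hη.le
    exact_mod_cast this.trans_lt hm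
  set y := subdividePartition x m
  have hy := strictMono_subdividePartition hx hm0
  have hyK : ∀ k, y k ∈ K := fun k =>
    ⟨(subdividePartition_zero (x := x) (m := m)) ▸ hy.monotone (Fin.zero_le k),
      (subdividePartition_last (x := x) hm0) ▸ hy.monotone (Fin.le_last k)⟩
  refine ⟨n * m, y, hy, tvSum_le_tvSum_subdividePartition g hm0, fun j => ?_⟩
  have hstep : dist (y j.succ) (y j.castSucc) < η := by
    rw [Real.dist_eq, abs_of_pos (sub_pos.2 (hy j.castSucc_lt_succ))]
    calc _ ≤ (x (Fin.last n) - x 0) / m := subdividePartition_succ_sub_le hx.monotone hm0 j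
      _ < η := by rwa [div_lt_iff₀ (by positivity), mul_comm, ← div_lt_iff₀ hη]
  simpa only [Real.dist_eq] using (hgK _ (hyK _) _ (hyK _) hstep).le

lemma ofReal_tvSum_log_le_WTV {f : ℝ → ℝ} (hpos : ∀ t, 0 < f t) (hf : Continuous f) {n : ℕ}
    {x : Fin (n + 1) → ℝ} (hx : StrictMono x) :
    ENNReal.ofReal (tvSum (fun t => log (f t)) n x) ≤ WTV f := by
  set T := tvSum (fun t => log (f t)) n x
  have hg : Continuous fun t => log (f t) := hf.log fun t => (hpos t).ne'
  have hbound : ∀ δ ∈ Ioo (0 : ℝ) 2, ENNReal.ofReal ((1 - δ ^ 2 / 4) * T) ≤ WTV f := by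
    intro δ hδ
    obtain ⟨N, y, hy, hT, hosc⟩ := exists_tvSum_le_of_continuous hg hx hδ.1
    calc ENNReal.ofReal ((1 - δ ^ 2 / 4) * T)
        ≤ ENNReal.ofReal (wtvSum f N y) := ENNReal.ofReal_le_ofReal <|
          (mul_le_mul_of_nonneg_left hT (by nlinarith [hδ.1, hδ.2])).trans
            (one_sub_sq_div_four_mul_tvSum_log_le_wtvSum hpos hosc)
      _ ≤ WTV f := le_iSup₂_of_le N ⟨y, hy⟩ le_rfl
  have hlim : Tendsto (fun δ : ℝ => ENNReal.ofReal ((1 - δ ^ 2 / 4) * T)) (𝓝[>] 0)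
      (𝓝 (ENNReal.ofReal T)) := by
    refine ENNReal.tendsto_ofReal ?_
    simpa using ((by fun_prop : Continuous fun δ : ℝ => (1 - δ ^ 2 / 4) * T).tendsto 0).mono_left
      nhdsWithin_le_nhds
  exact le_of_tendsto hlim (by filter_upwards [Ioo_mem_nhdsGT two_pos] using hbound)

theorem wtv_eq_tv_log_of_continuous (f : ℝ → ℝ)
    (hpos : ∀ x, 0 < f x) (hf : Continuous f) :
    WTV f = TV (fun x => Real.log (f x)) := by
  refine le_antisymm (iSup₂_le fun n x => ?_) (iSup₂_le fun n x => ?_)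
  · exact (ENNReal.ofReal_le_ofReal (wtvSum_le_tvSum_log hpos x.1)).trans
      (le_iSup₂_of_le n x le_rfl)
  · exact ofReal_tvSum_log_le_WTV hpos hf x.2
end

section
/- Define h(ε) = ε for ε ≥ 0 and h(ε) = sinh ε for ε < 0. If a, b ∈ ℝ satisfy a < 0, b < 0, and ε₁, ε₃ solve ε₃ − ε₁ = a + b and h(ε₁) + h(ε₃) = h(a) + h(b), then ε₁ > 0 and ε₃ < 0. -/
noncomputable def h (ε : ℝ) : ℝ := if 0 ≤ ε then ε else Real.sinh ε

lemma h_of_nonpos {x : ℝ} (hx : x ≤ 0) : h x = Real.sinh x := by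
  rcases eq_or_lt_of_le hx with rfl | hx'
  · simp [h]
  · simp [h, not_le.mpr hx']

lemma h_of_neg {x : ℝ} (hx : x < 0) : h x = Real.sinh x := h_of_nonpos hx.le

lemma h_of_nonneg {x : ℝ} (hx : 0 ≤ x) : h x = x := if_pos hx

lemma sum_sinh (x y : ℝ) :
    Real.sinh x + Real.sinh y =
      2 * Real.sinh ((x + y) / 2) * Real.cosh ((x - y) / 2) := by
  have e1 := Real.sinh_add ((x + y) / 2) ((x - y) / 2)
  have e2 := Real.sinh_sub ((x + y) / 2) ((x - y) / 2)
  have hx : (x + y) / 2 + (x - y) / 2 = x := by ring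
  have hy : (x + y) / 2 - (x - y) / 2 = y := by ring
  rw [hx] at e1
  rw [hy] at e2
  linarith

theorem shock_shock_interaction (a b ε₁ ε₃ : ℝ)
    (ha : a < 0) (hb : b < 0)
    (h1 : ε₃ - ε₁ = a + b)
    (h2 : h ε₁ + h ε₃ = h a + h b) :
    0 < ε₁ ∧ ε₃ < 0 := by
  rw [h_of_neg ha, h_of_neg hb] at h2
  have hsa : Real.sinh a < 0 := by rwa [Real.sinh_neg_iff]
  have hsb : Real.sinh b < 0 := by rwa [Real.sinh_neg_iff]
  have hε₃ : ε₃ < 0 := by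
    by_contra hc
    push_neg at hc
    have hε₁ : 0 < ε₁ := by linarith
    rw [h_of_nonneg hε₁.le, h_of_nonneg hc] at h2
    linarith
  refine ⟨?_, hε₃⟩
  by_contra hc
  push_neg at hc
  rw [h_of_nonpos hc, h_of_neg hε₃] at h2
  rw [sum_sinh ε₁ ε₃, sum_sinh a b] at h2
  have hmid : (ε₁ - ε₃) / 2 = -((a + b) / 2) := by linarith
  rw [hmid, Real.cosh_neg] at h2
  -- h2 : 2 * sinh ((ε₁+ε₃)/2) * cosh ((a+b)/2) = 2 * sinh ((a+b)/2) * cosh ((a-b)/2)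
  have hss : Real.sinh ((a + b) / 2) < 0 := by
    rw [Real.sinh_neg_iff]; linarith
  have hcoshlt : Real.cosh ((a - b) / 2) < Real.cosh ((a + b) / 2) := by
    rw [Real.cosh_lt_cosh]
    rw [abs_lt, abs_of_neg (by linarith : (a + b) / 2 < 0)]
    constructor <;> linarith
  have hcpos : 0 < Real.cosh ((a + b) / 2) := Real.cosh_pos _
  have key : Real.sinh ((a + b) / 2) < Real.sinh ((ε₁ + ε₃) / 2) := by
    nlinarith
  rw [Real.sinh_lt_sinh] at key
  linarith
end

section
/- Define h(ε) = ε for ε ≥ 0 and h(ε) = sinh ε for ε < 0. If a, b ∈ ℝ with ab < 0, and ε₁, ε₃ solve ε₃ − ε₁ = a + b and h(ε₁) + h(ε₃) = h(a) + h(b), then ε₁ < 0. -/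
lemma g_mono : StrictMonoOn (fun x : ℝ => Real.sinh x - x) (Set.Iic 0) := by
  apply strictMonoOn_of_deriv_pos (convex_Iic 0)
  · exact (Real.continuous_sinh.sub continuous_id).continuousOn
  · intro x hx
    rw [interior_Iic] at hx
    have : deriv (fun x : ℝ => Real.sinh x - x) x = Real.cosh x - 1 := by
      simp [Real.deriv_sinh]
    rw [this]
    have : 1 < Real.cosh x := Real.one_lt_cosh.mpr (ne_of_lt hx)
    linarith

lemma sinh_lt_self {x : ℝ} (hx : x < 0) : Real.sinh x < x :=
  Real.sinh_lt_self_iff.mpr hx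

lemma h_le_self (x : ℝ) : h x ≤ x := by
  unfold h
  split_ifs with hx
  · exact le_rfl
  · exact le_of_lt (sinh_lt_self (lt_of_not_ge hx))

lemma key (a b ε₁ ε₃ : ℝ) (ha : 0 < a) (hb : b < 0)
    (h1 : ε₃ - ε₁ = a + b) (h2 : h ε₁ + h ε₃ = h a + h b) : ε₁ < 0 := by
  have hha : h a = a := by unfold h; rw [if_pos ha.le]
  have hhb : h b = Real.sinh b := by unfold h; rw [if_neg (not_le.mpr hb)]
  by_cases hc : b < ε₃
  · by_contra hε₁
    push_neg at hε₁
    have hh1 : h ε₁ = ε₁ := by unfold h; rw [if_pos hε₁]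
    -- show h ε₃ - ε₃ > sinh b - b
    have hkey : Real.sinh b - b < h ε₃ - ε₃ := by
      by_cases h3 : 0 ≤ ε₃
      · have : h ε₃ = ε₃ := by unfold h; rw [if_pos h3]
        rw [this]
        have := sinh_lt_self hb
        linarith
      · push_neg at h3
        have : h ε₃ = Real.sinh ε₃ := by unfold h; rw [if_neg (not_le.mpr h3)]
        rw [this]
        have := g_mono (Set.mem_Iic.mpr hb.le) (Set.mem_Iic.mpr h3.le) hc
        simpa using this
    -- from h2: ε₁ + h ε₃ = a + sinh b, and a = ε₃ - ε₁ - b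
    rw [hh1, hha, hhb] at h2
    have : a = ε₃ - ε₁ - b := by linarith
    linarith
  · push_neg at hc
    -- ε₁ = ε₃ - a - b ≤ -a < 0
    linarith

theorem shock_rarefaction_reflected_shock (a b ε₁ ε₃ : ℝ)
    (hab : a * b < 0)
    (h1 : ε₃ - ε₁ = a + b)
    (h2 : h ε₁ + h ε₃ = h a + h b) :
    ε₁ < 0 := by
  rcases mul_neg_iff.mp hab with ⟨ha, hb⟩ | ⟨ha, hb⟩
  · exact key a b ε₁ ε₃ ha hb h1 h2
  · exact key b a ε₁ ε₃ hb ha (by linarith) (by linarith)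
end

section
/- Define h(ε) = ε for ε ≥ 0 and h(ε) = sinh ε for ε < 0. If a ≠ 0, b ≠ 0 and τ satisfies h(τ) + h(τ + a + b) = h(a) + h(b) with τ + a + b playing the role of the outgoing same-family wave, then |τ| < min{|a|, |b|}. -/
lemma h_strictMono : StrictMono h := by
  intro x y hxy
  unfold h
  split_ifs with hx hy hy
  · exact hxy
  · exact absurd (le_of_lt (lt_of_le_of_lt hx hxy)) hy
  · have h1 : Real.sinh x < Real.sinh 0 := Real.sinh_lt_sinh.mpr (by linarith)
    rw [Real.sinh_zero] at h1
    linarith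
  · exact Real.sinh_lt_sinh.mpr hxy

lemma key_s10 (a b τ : ℝ) (ha : a ≠ 0)
    (hτ : h τ + h (τ + a + b) = h a + h b) : |τ| < |a| := by
  have hm := h_strictMono
  have hF : StrictMono (fun t => h t + h (t + a + b)) := by
    have hlin : StrictMono (fun t : ℝ => t + a + b) := fun x y hxy => by
      simpa using add_lt_add_right (add_lt_add_right hxy a) b
    exact hm.add (hm.comp hlin)
  rw [abs_lt]
  rcases ha.lt_or_gt with hneg | hpos
  · rw [abs_of_neg hneg, neg_neg]
    constructor
    · refine hF.lt_iff_lt.mp ?_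
      show h a + h (a + a + b) < h τ + h (τ + a + b)
      have h1 : h (a + a + b) < h b := hm (by linarith)
      linarith
    · refine hF.lt_iff_lt.mp ?_
      show h τ + h (τ + a + b) < h (-a) + h (-a + a + b)
      have e : -a + a + b = b := by ring
      rw [e]
      have h1 : h a < h (-a) := hm (by linarith)
      linarith
  · rw [abs_of_pos hpos]
    constructor
    · refine hF.lt_iff_lt.mp ?_
      show h (-a) + h (-a + a + b) < h τ + h (τ + a + b)
      have e : -a + a + b = b := by ring
      rw [e]
      have h1 : h (-a) < h a := hm (by linarith)
      linarith
    · refine hF.lt_iff_lt.mp ?_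
      show h τ + h (τ + a + b) < h a + h (a + a + b)
      have h1 : h b < h (a + a + b) := hm (by linarith)
      linarith

theorem reflected_wave_strictly_smaller (a b τ : ℝ)
    (ha : a ≠ 0) (hb : b ≠ 0)
    (hτ : h τ + h (τ + a + b) = h a + h b) :
    |τ| < min |a| |b| := by
  refine lt_min (key_s10 a b τ ha hτ) (key_s10 b a τ hb ?_)
  have e : τ + b + a = τ + a + b := by
    ring
  rw [e, hτ, add_comm]
end

section
/- Define h(ε) = ε for ε ≥ 0 and h(ε) = sinh ε for ε < 0. If a < 0, b < 0 and ε₁ > 0 > ε₃ satisfy ε₃ − ε₁ = a + b and h(ε₁) + h(ε₃) = h(a) + h(b), then |ε₃| > max{|a|, |b|}. -/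
theorem outgoing_shock_stronger (a b ε₁ ε₃ : ℝ)
    (ha : a < 0) (hb : b < 0)
    (hε₁ : 0 < ε₁) (hε₃ : ε₃ < 0)
    (h1 : ε₃ - ε₁ = a + b)
    (h2 : h ε₁ + h ε₃ = h a + h b) :
    |ε₃| > max |a| |b| := by
  simp only [h, if_pos hε₁.le, if_neg (not_le.mpr hε₃), if_neg (not_le.mpr ha),
    if_neg (not_le.mpr hb)] at h2
  have hsa : Real.sinh a < 0 := by
    have := Real.sinh_lt_sinh.mpr ha
    simpa using this
  have hsb : Real.sinh b < 0 := by
    have := Real.sinh_lt_sinh.mpr hb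
    simpa using this
  have h1a : ε₁ < -a := by
    by_contra hc
    push_neg at hc
    have hb3 : Real.sinh b ≤ Real.sinh ε₃ := Real.sinh_le_sinh.mpr (by linarith)
    linarith
  have h1b : ε₁ < -b := by
    by_contra hc
    push_neg at hc
    have ha3 : Real.sinh a ≤ Real.sinh ε₃ := Real.sinh_le_sinh.mpr (by linarith)
    linarith
  rw [abs_of_neg hε₃, abs_of_neg ha, abs_of_neg hb]
  rw [gt_iff_lt, max_lt_iff]
  constructor <;> linarith
end

section
/- Let x₀(z) be the unique solution of sinh(x−z) − sinh(z) + x = 0 for z ≥ 0. Then x₀(z) − 2z → 0 as z → +∞. -/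
open Filter

theorem threshold_asymptotics (x₀ : ℝ → ℝ)
    (hx₀ : ∀ z : ℝ, 0 ≤ z → Real.sinh (x₀ z - z) - Real.sinh z + x₀ z = 0) :
    Tendsto (fun z => x₀ z - 2 * z) atTop (nhds 0) := by
  rw [NormedAddCommGroup.tendsto_nhds_zero]
  intro ε hε
  set ε' : ℝ := ε / 2 with hε'def
  have hε'pos : 0 < ε' := by positivity
  have hmono : ∀ z : ℝ, StrictMono (fun x => Real.sinh (x - z) + x) := by
    intro z a b hab
    have := Real.sinh_lt_sinh.2 (show a - z < b - z by linarith)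
    dsimp only
    linarith
  have hc : 0 < (1 - Real.exp (-ε')) / 2 := by
    have : Real.exp (-ε') < 1 := Real.exp_lt_one_iff.2 (by linarith)
    linarith
  set c : ℝ := (1 - Real.exp (-ε')) / 2 with hcdef
  have h1 : ∀ᶠ z : ℝ in atTop, 2 / c ≤ Real.exp z / z := by
    have := Real.tendsto_exp_div_pow_atTop 1
    simpa using this.eventually_ge_atTop (2 / c)
  filter_upwards [h1, eventually_ge_atTop (1 : ℝ)] with z hz hz1
  have hz0 : (0 : ℝ) ≤ z := by linarith
  have heq : Real.sinh (x₀ z - z) + x₀ z = Real.sinh z := by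
    have := hx₀ z hz0; linarith
  -- upper bound : x₀ z ≤ 2 z
  have hupper : x₀ z ≤ 2 * z := by
    refine ((hmono z).le_iff_le).1 ?_
    show Real.sinh (x₀ z - z) + x₀ z ≤ Real.sinh (2 * z - z) + 2 * z
    rw [heq, show 2 * z - z = z by ring]
    linarith
  -- exponential growth bound
  have hexpz : Real.exp z * c ≥ 2 * z := by
    have hzpos : (0 : ℝ) < z := by linarith
    have : 2 / c * z ≤ Real.exp z / z * z := by
      exact mul_le_mul_of_nonneg_right hz hz0
    rw [div_mul_cancel₀ _ (ne_of_gt hzpos)] at this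
    have h2 : 2 / c * z * c ≤ Real.exp z * c :=
      mul_le_mul_of_nonneg_right this (le_of_lt hc)
    have h3 : 2 / c * z * c = 2 * z := by field_simp
    linarith
  have hgrow : Real.sinh z - Real.sinh (z - ε') ≥ 2 * z := by
    have e1 : Real.exp (z - ε') = Real.exp z * Real.exp (-ε') := by
      rw [← Real.exp_add]; ring_nf
    have e2 : Real.exp (-z) ≤ Real.exp (-(z - ε')) :=
      Real.exp_le_exp.2 (by linarith)
    have hsz := Real.sinh_eq z
    have hsz' := Real.sinh_eq (z - ε')
    have : Real.sinh z - Real.sinh (z - ε') ≥ Real.exp z * c := by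
      rw [hsz, hsz', e1, hcdef]
      nlinarith [Real.exp_pos z]
    linarith
  -- lower bound : 2 z - ε' ≤ x₀ z
  have hlower : 2 * z - ε' ≤ x₀ z := by
    refine ((hmono z).le_iff_le).1 ?_
    show Real.sinh (2 * z - ε' - z) + (2 * z - ε') ≤ Real.sinh (x₀ z - z) + x₀ z
    rw [heq, show 2 * z - ε' - z = z - ε' by ring]
    linarith
  rw [Real.norm_eq_abs, abs_lt]
  constructor <;> [skip; skip] <;> simp only [hε'def] at hlower hupper <;> linarith
end

section
/- Let 1/2 ≤ c < 1 and m > 0 with cosh(m) ≤ (1+c)/(1−c). For every z ∈ (0, m] and every x with 0 ≤ x and z − (1−c)x ≥ 0, the function Φ(x) = sinh(cx) + sinh(z−(1−c)x) − sinh(z) + x is nonnegative. Consequently, if y solves sinh(y) + sinh(y−x+z) = sinh(z) − x with 0 ≤ y ≤ x, then y ≤ c·x. -/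
/-!
Put `Φ(t) = sinh (c t) + sinh (z - (1 - c) t) - sinh z + t`, so `Φ 0 = 0`. On `[0, x]` the argument
`z - (1 - c) t` stays in `[0, z]`, hence `cosh (z - (1 - c) t) ≤ cosh z ≤ cosh m`, and the hypothesis
`(1 - c) cosh m ≤ 1 + c` makes `Φ' t = c cosh (c t) - (1 - c) cosh (z - (1 - c) t) + 1 ≥ c - (1 + c) + 1 = 0`.
So `Φ x ≥ 0`. If `y > c x` solved the wave-interaction equation, strict monotonicity of `sinh` in both terms
would give `sinh z - x > sinh (c x) + sinh (z - (1 - c) x)`, i.e. `Φ x < 0`.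
-/

open Real

noncomputable section

namespace Damping

variable {c z : ℝ}

def phi (c z t : ℝ) : ℝ := sinh (c * t) + sinh (z - (1 - c) * t) - sinh z + t

@[simp]
lemma phi_zero : phi c z 0 = 0 := by simp [phi]

lemma hasDerivAt_phi (t : ℝ) :
    HasDerivAt (phi c z) (c * cosh (c * t) - (1 - c) * cosh (z - (1 - c) * t) + 1) t := by
  have hc : HasDerivAt (fun t => sinh (c * t)) (cosh (c * t) * c) t :=
    (hasDerivAt_sinh _).comp t ((hasDerivAt_id t).const_mul c |>.congr_deriv (mul_one c))
  have hz : HasDerivAt (fun t => sinh (z - (1 - c) * t)) (cosh (z - (1 - c) * t) * -(1 - c)) t :=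
    (hasDerivAt_sinh _).comp t
      (((hasDerivAt_id t).const_mul (1 - c)).const_sub z |>.congr_deriv (by simp))
  exact (((hc.add hz).sub_const (sinh z)).add (hasDerivAt_id' t)).congr_deriv (by ring)

lemma cosh_le_cosh_of_nonneg_of_le {a b : ℝ} (ha : 0 ≤ a) (hab : a ≤ b) : cosh a ≤ cosh b := by
  rw [cosh_le_cosh, abs_of_nonneg ha, abs_of_nonneg (ha.trans hab)]
  exact hab

lemma deriv_phi_nonneg (hc₀ : 0 ≤ c) (hc₁ : c ≤ 1) (hcz : (1 - c) * cosh z ≤ 1 + c) {t : ℝ}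
    (ht : 0 ≤ t) (hzt : 0 ≤ z - (1 - c) * t) :
    0 ≤ c * cosh (c * t) - (1 - c) * cosh (z - (1 - c) * t) + 1 := by
  have hcosh_ct : c ≤ c * cosh (c * t) := le_mul_of_one_le_right hc₀ (one_le_cosh _)
  have hcosh_zt : (1 - c) * cosh (z - (1 - c) * t) ≤ (1 - c) * cosh z :=
    mul_le_mul_of_nonneg_left
      (cosh_le_cosh_of_nonneg_of_le hzt (by nlinarith)) (by linarith)
  linarith

lemma phi_nonneg (hc₀ : 0 ≤ c) (hc₁ : c ≤ 1) (hcz : (1 - c) * cosh z ≤ 1 + c) {x : ℝ}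
    (hx : 0 ≤ x) (hzx : 0 ≤ z - (1 - c) * x) : 0 ≤ phi c z x := by
  have hmono : MonotoneOn (phi c z) (Set.Icc 0 x) := by
    refine monotoneOn_of_hasDerivWithinAt_nonneg (convex_Icc 0 x)
      (fun t _ => (hasDerivAt_phi t).continuousAt.continuousWithinAt)
      (fun t _ => (hasDerivAt_phi t).hasDerivWithinAt) fun t ht => ?_
    rw [interior_Icc] at ht
    exact deriv_phi_nonneg hc₀ hc₁ hcz ht.1.le (by nlinarith [ht.2])
  simpa using hmono (Set.left_mem_Icc.2 hx) (Set.right_mem_Icc.2 hx) hx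

lemma le_mul_of_phi_nonneg {x y : ℝ} (hphi : 0 ≤ phi c z x)
    (hy : sinh y + sinh (y - x + z) = sinh z - x) : y ≤ c * x := by
  by_contra! hlt
  have h₁ : sinh (c * x) < sinh y := sinh_lt_sinh.2 hlt
  have h₂ : sinh (z - (1 - c) * x) < sinh (y - x + z) := sinh_lt_sinh.2 (by linarith)
  unfold phi at hphi
  linarith

end Damping

end

theorem damping_estimate_general (c m : ℝ) (hc₁ : 1 / 2 ≤ c) (hc₂ : c < 1)
    (hcm : Real.cosh m ≤ (1 + c) / (1 - c)) :
    ∀ z : ℝ, 0 < z → z ≤ m → ∀ x : ℝ, 0 ≤ x → 0 ≤ z - (1 - c) * x →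
      (0 ≤ Real.sinh (c * x) + Real.sinh (z - (1 - c) * x) - Real.sinh z + x) ∧
      (∀ y : ℝ, Real.sinh y + Real.sinh (y - x + z) = Real.sinh z - x →
        0 ≤ y → y ≤ x → y ≤ c * x) := by
  intro z hz hzm x hx hzx
  have hcz : (1 - c) * cosh z ≤ 1 + c := by
    have hcoshz : cosh z ≤ (1 + c) / (1 - c) :=
      (Damping.cosh_le_cosh_of_nonneg_of_le hz.le hzm).trans hcm
    rwa [le_div_iff₀ (by linarith), mul_comm] at hcoshz
  have hphi : 0 ≤ Damping.phi c z x := Damping.phi_nonneg (by linarith) hc₂.le hcz hx hzx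
  exact ⟨hphi, fun y hy _ _ => Damping.le_mul_of_phi_nonneg hphi hy⟩

theorem damping_estimate (c m : ℝ) (hc₁ : 1 / 2 ≤ c) (hc₂ : c < 1) (hm : 0 < m)
    (hcm : Real.cosh m ≤ (1 + c) / (1 - c)) :
    ∀ z : ℝ, 0 < z → z ≤ m → ∀ x : ℝ, 0 ≤ x → 0 ≤ z - (1 - c) * x →
      (0 ≤ Real.sinh (c * x) + Real.sinh (z - (1 - c) * x) - Real.sinh z + x) ∧
      (∀ y : ℝ, Real.sinh y + Real.sinh (y - x + z) = Real.sinh z - x →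
        0 ≤ y → y ≤ x → y ≤ c * x) :=
  damping_estimate_general c m hc₁ hc₂ hcm
end

section
/- Let 0 < c < 1 and set z_c = log((1+c)/(1−c) + sqrt(((1+c)/(1−c))² − 1)). Define φ(z) = sinh(cz) − sinh(z) + (1+c)z. Then φ(0) = 0, φ is concave on [0,∞), φ'(0) = 2c > 0, and φ'(z_c) < 0; for c = 1/2 one has φ(z) > 0 for 0 < z ≤ z_{1/2} = log(3 + 2√2). -/
/-!
On `[0, ∞)` one has `c² sinh (c z) ≤ sinh z`, so `φ'' ≤ 0` and `φ` is concave. The point `z_c` is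
`arcosh ((1 + c) / (1 - c))`; there `cosh (c z_c) < cosh z_c`, which makes
`φ'(z_c) < (1 + c) - (1 - c) cosh z_c = 0`. For `c = 1/2` the endpoint is `log (3 + 2√2) = 2 arsinh 1`,
where `φ = 1 - 2√2 + 3 arsinh 1 > 0` because `arsinh 1 > log 2`; concavity together with `φ 0 = 0`
then gives `φ > 0` on the whole interval.
-/

open Real Set

theorem ConcaveOn.pos_of_mem_Ioc {f : ℝ → ℝ} {a b z : ℝ} (hf : ConcaveOn ℝ (Icc a b) f)
    (ha : 0 ≤ f a) (hb : 0 < f b) (hz : z ∈ Ioc a b) : 0 < f z := by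
  obtain ⟨haz, hzb⟩ := hz
  have hab : 0 < b - a := by linarith
  set t := (z - a) / (b - a) with ht
  have ht0 : 0 < t := div_pos (by linarith) hab
  have ht1 : t ≤ 1 := (div_le_one hab).mpr (by linarith)
  have hcomb : (1 - t) • a + t • b = z := by
    simp only [smul_eq_mul, ht]; field_simp; ring
  have key := hf.2 (left_mem_Icc.mpr (by linarith)) (right_mem_Icc.mpr (by linarith))
    (sub_nonneg.mpr ht1) ht0.le (by ring)
  rw [hcomb, smul_eq_mul, smul_eq_mul] at key
  nlinarith [mul_nonneg (sub_nonneg.mpr ht1) ha, mul_pos ht0 hb]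

theorem sq_mul_sinh_mul_le_sinh {c x : ℝ} (hc₀ : 0 ≤ c) (hc₁ : c ≤ 1) (hx : 0 ≤ x) :
    c ^ 2 * sinh (c * x) ≤ sinh x := by
  have hsinh_nonneg : 0 ≤ sinh (c * x) := sinh_nonneg_iff.mpr (mul_nonneg hc₀ hx)
  have hsinh_le : sinh (c * x) ≤ sinh x := sinh_le_sinh.mpr (mul_le_of_le_one_left hx hc₁)
  calc c ^ 2 * sinh (c * x) ≤ 1 * sinh (c * x) := by
        gcongr; nlinarith
    _ ≤ sinh x := by rwa [one_mul]

noncomputable def phi (c z : ℝ) : ℝ := sinh (c * z) - sinh z + (1 + c) * z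

@[simp]
theorem phi_zero (c : ℝ) : phi c 0 = 0 := by simp [phi]

theorem hasDerivAt_phi (c z : ℝ) :
    HasDerivAt (phi c) (c * cosh (c * z) - cosh z + (1 + c)) z := by
  have h := (((hasDerivAt_id' z).const_mul c).sinh.sub (hasDerivAt_sinh z)).add
    ((hasDerivAt_id' z).const_mul (1 + c))
  exact h.congr_deriv (by ring)

theorem hasDerivAt_deriv_phi (c z : ℝ) :
    HasDerivAt (deriv (phi c)) (c ^ 2 * sinh (c * z) - sinh z) z := by
  have hderiv : deriv (phi c) = fun z => c * cosh (c * z) - cosh z + (1 + c) :=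
    funext fun z => (hasDerivAt_phi c z).deriv
  have h := ((((hasDerivAt_id' z).const_mul c).cosh.const_mul c).sub
    (hasDerivAt_cosh z)).add_const (1 + c)
  rw [hderiv]
  exact h.congr_deriv (by ring)

theorem deriv_phi_zero (c : ℝ) : deriv (phi c) 0 = 2 * c := by
  rw [(hasDerivAt_phi c 0).deriv]; simp; ring

theorem concaveOn_phi {c : ℝ} (hc₀ : 0 ≤ c) (hc₁ : c ≤ 1) : ConcaveOn ℝ (Ici 0) (phi c) := by
  refine concaveOn_of_hasDerivWithinAt2_nonpos (convex_Ici 0)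
    (fun z _ => (hasDerivAt_phi c z).continuousAt.continuousWithinAt)
    (fun z _ => (hasDerivAt_phi c z).differentiableAt.hasDerivAt.hasDerivWithinAt)
    (fun z _ => (hasDerivAt_deriv_phi c z).hasDerivWithinAt) fun z hz => ?_
  rw [interior_Ici] at hz
  exact sub_nonpos.mpr (sq_mul_sinh_mul_le_sinh hc₀ hc₁ (le_of_lt hz))

theorem deriv_phi_arcosh_neg {c : ℝ} (hc₀ : 0 < c) (hc₁ : c < 1) :
    deriv (phi c) (arcosh ((1 + c) / (1 - c))) < 0 := by
  set x := (1 + c) / (1 - c)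
  have hx : (1 - c) * x = 1 + c := mul_div_cancel₀ _ (by linarith)
  have hx₁ : 1 < x := (one_lt_div (by linarith)).mpr (by linarith)
  set z := arcosh x
  have hz : 0 < z := arcosh_pos hx₁
  have hcosh : cosh z = x := cosh_arcosh hx₁.le
  have hlt : cosh (c * z) < cosh z := by
    rw [cosh_lt_cosh, abs_of_pos (mul_pos hc₀ hz), abs_of_pos hz]
    exact mul_lt_of_lt_one_left hz hc₁
  rw [(hasDerivAt_phi c z).deriv, hcosh]
  rw [hcosh] at hlt
  nlinarith [mul_lt_mul_of_pos_left hlt hc₀]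

theorem log_three_add_two_mul_sqrt_two : log (3 + 2 * √2) = 2 * arsinh 1 := by
  have hsq : (1 + √2) ^ 2 = 3 + 2 * √2 := by
    nlinarith [sq_sqrt (show (0 : ℝ) ≤ 2 by norm_num)]
  rw [arsinh, one_pow, one_add_one_eq_two, ← hsq, log_pow]
  norm_num

theorem phi_half_two_mul_arsinh_one_pos : 0 < phi (1 / 2) (2 * arsinh 1) := by
  have hsqrt : √2 < 3 / 2 := (sqrt_lt' (by norm_num)).mpr (by norm_num)
  have harsinh : log 2 < arsinh 1 := by
    rw [arsinh]
    exact log_lt_log (by norm_num) (by norm_num; linarith [one_lt_sqrt_two])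
  have hvalue : phi (1 / 2) (2 * arsinh 1) = 1 - 2 * √2 + 3 * arsinh 1 := by
    rw [phi, show (1 / 2 : ℝ) * (2 * arsinh 1) = arsinh 1 by ring, sinh_two_mul, sinh_arsinh,
      cosh_arsinh]
    norm_num; ring
  rw [hvalue]
  linarith [log_two_gt_d9]

theorem phi_properties (c : ℝ) (hc₀ : 0 < c) (hc₁ : c < 1)
    (zc : ℝ)
    (hzc : zc = Real.log ((1 + c) / (1 - c) + Real.sqrt (((1 + c) / (1 - c)) ^ 2 - 1)))
    (φ : ℝ → ℝ)
    (hφ : ∀ z, φ z = Real.sinh (c * z) - Real.sinh z + (1 + c) * z) :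
    φ 0 = 0 ∧
    ConcaveOn ℝ (Set.Ici 0) φ ∧
    deriv φ 0 = 2 * c ∧ 0 < 2 * c ∧
    deriv φ zc < 0 ∧
    (c = 1 / 2 → ∀ z : ℝ, 0 < z → z ≤ Real.log (3 + 2 * Real.sqrt 2) → 0 < φ z) := by
  obtain rfl : φ = phi c := funext hφ
  obtain rfl : zc = arcosh ((1 + c) / (1 - c)) := hzc
  refine ⟨phi_zero c, concaveOn_phi hc₀.le hc₁.le, deriv_phi_zero c, by positivity,
    deriv_phi_arcosh_neg hc₀ hc₁, ?_⟩
  rintro rfl z hz hzL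
  rw [log_three_add_two_mul_sqrt_two] at hzL
  exact ((concaveOn_phi (by norm_num) (by norm_num)).subset Icc_subset_Ici_self
    (convex_Icc _ _)).pos_of_mem_Ioc (phi_zero _).ge phi_half_two_mul_arsinh_one_pos ⟨hz, hzL⟩
end

section
/- Define h(ε) = ε for ε ≥ 0 and h(ε) = sinh ε for ε < 0, and fix a₃ ∈ ℝ, b₃ ∈ ℝ. If ε₁, ε₃ and δ₁, δ₃ both solve ε₃ − ε₁ = a₃ + b₃ (resp. δ₃ − δ₁ = a₃ + b₃) and h(ε₁) + h(ε₃) = h(a₃) + h(b₃) (resp. for δ), then ε₁ = δ₁ and ε₃ = δ₃; i.e., the solution of the interaction system is unique. -/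
theorem interaction_system_unique (a₃ b₃ ε₁ ε₃ δ₁ δ₃ : ℝ)
    (hε : ε₃ - ε₁ = a₃ + b₃) (hδ : δ₃ - δ₁ = a₃ + b₃)
    (hε' : h ε₁ + h ε₃ = h a₃ + h b₃) (hδ' : h δ₁ + h δ₃ = h a₃ + h b₃) :
    ε₁ = δ₁ ∧ ε₃ = δ₃ := by
  set s := a₃ + b₃
  have hε3 : ε₃ = ε₁ + s := by linarith
  have hδ3 : δ₃ = δ₁ + s := by linarith
  have hmono : StrictMono (fun x => h x + h (x + s)) :=
    fun x y hxy => add_lt_add (h_strictMono hxy) (h_strictMono (by linarith))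
  have h1 : ε₁ = δ₁ := hmono.injective (by
    show h ε₁ + h (ε₁ + s) = h δ₁ + h (δ₁ + s)
    rw [← hε3, ← hδ3, hε', hδ'])
  exact ⟨h1, by rw [hε3, hδ3, h1]⟩
end
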